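/- Let V be a type and F : Set V → Set V a monotone function. Define the induced operator G on binary relations over V by G(R) := (F({x | (x,x) ∈ R}))?, where S? := {(x,x) | x ∈ S} is the test relation. Then G is monotone with respect to inclusion of relations, and its least fixed point equals (lfp F)?, the test relation of the least fixed point of F. (This is the least-fixed-point case of the paper's theorem that the two-sorted syntax of L𝜇𝜇 translates into the minimal one-sorted syntax: the state formula μX.φ translates to a binary fixed point whose extension is the diagonal of the extension of μX.φ.) -/

import Mathlib

/-!
The induced operator factors as `G = test ∘ F ∘ diag`, where `diag R = {x | (x, x) ∈ R}` is a
left inverse of `test`. By the rolling rule `lfp (f ∘ g) = f (lfp (g ∘ f))`, its least fixed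
point is `test (lfp (F ∘ diag ∘ test)) = test (lfp F)`.
-/

namespace OrderHom

variable {α β : Type*} [CompleteLattice α] [CompleteLattice β]

theorem lfp_comp_comp_of_leftInverse (F : α →o α) (f : α →o β) (g : β →o α)
    (h : Function.LeftInverse g f) : (f.comp (F.comp g)).lfp = f F.lfp := by
  have hF : (F.comp g).comp f = F := ext _ _ (funext fun a => congrArg F (h a))
  rw [← map_lfp_comp, hF]

end OrderHom

namespace Set

variable {V : Type*}

def testRel : Set V →o Set (V × V) :=
  ⟨fun S => {p | p.1 = p.2 ∧ p.1 ∈ S}, fun _ _ hST _ hp => ⟨hp.1, hST hp.2⟩⟩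

def diagPreimage : Set (V × V) →o Set V :=
  ⟨fun R => {x | (x, x) ∈ R}, fun _ _ hRS _ hx => hRS hx⟩

theorem diagPreimage_testRel (S : Set V) : diagPreimage (testRel S) = S :=
  Set.ext fun _ => ⟨And.right, And.intro rfl⟩

end Set

/-- the induced operator G(R) := (F({x | (x,x) ∈ R}))? is monotone
and its least fixed point is the test relation of lfp F. -/
theorem stmt7 (V : Type*) (F : Set V → Set V) (hF : Monotone F) :
    let test : Set V → Set (V × V) :=
      fun S => {p | p.1 = p.2 ∧ p.1 ∈ S}
    let G : Set (V × V) → Set (V × V) :=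
      fun R => test (F {x | (x, x) ∈ R})
    Monotone G ∧ IsLeast {R | G R = R} (test (OrderHom.lfp ⟨F, hF⟩)) := by
  intro test G
  let G' : Set (V × V) →o Set (V × V) :=
    Set.testRel.comp ((⟨F, hF⟩ : Set V →o Set V).comp Set.diagPreimage)
  have hlfp : G'.lfp = test (OrderHom.lfp ⟨F, hF⟩) :=
    OrderHom.lfp_comp_comp_of_leftInverse _ _ _ Set.diagPreimage_testRel
  exact ⟨G'.monotone, hlfp ▸ G'.isLeast_lfp⟩
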